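/- Let m be a positive integer with q = 2^m ≥ 4, let β ∈ F_{2^m}, and let α = (α_1,…,α_{q−1}) be an enumeration of F_{2^m}∖{β}. Then the complete weight enumerator of ERS_3(α) satisfies W(ERS_3(α)) = ∑_{ρ∈F_{2^m}} w_0 w_ρ^{2^m−1} + (2^m−1) ∑_{γ_1∈F_{2^m}} w_0 ∏_{ρ∈F_{2^m}∖{γ_1}} w_ρ + ∑_{γ_2∈F_{2^m}^*} ∑_{γ_1∈F_{2^m}} w_{γ_2} ∏_{ρ∈F_{2^m}∖{γ_1}} w_ρ + ∑_{γ_2∈F_{2^m}^*} ∑_{γ_1∈F_{2^m}^*} ∑_{γ_0∈F_{2^m}} w_{γ_2} w_{γ_0} ∏_{ρ∈F_{2^m}^*, Tr(ρ)=0} w_{γ_1 ρ + γ_0}^2. -/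

import Mathlib

/-!
The enumerator does not depend on `β`. In characteristic 2 the map `x ↦ a₂x² + a₁x` is additive,
so substituting `x = β + y` only shifts the constant coefficient, which runs over all of `F`
anyway. The coefficient pairs then fall into four classes. If `a₁ = a₂ = 0` the codeword is
constant. If exactly one of `a₁, a₂` vanishes, `y ↦ a₂y² + a₁y` is a bijection, so the punctured
codeword takes every value but one exactly once. If both are nonzero, `y ↦ (a₁/a₂)y` turns the
polynomial into `(a₁²/a₂)(y² + y) + c`, and `y ↦ y² + y` is two-to-one from `F` onto the
hyperplane `ker Tr`.
-/

open MvPolynomial Finset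

section Reindexing

variable {ι R : Type*} [Fintype ι] [DecidableEq ι]

@[to_additive]
lemma prod_erase_comp_equiv [CommMonoid R] (e : ι ≃ ι) (b : ι) (k : ι → R) :
    ∏ x ∈ univ.erase b, k (e x) = ∏ y ∈ univ.erase (e b), k y :=
  prod_equiv e (by simp) fun _ _ => rfl

lemma prod_comp_eq_prod_erase [CommMonoid R] {κ : Type*} [Fintype κ] {α : κ → ι}
    (hα : Function.Injective α) {β : ι} (hβ : ∀ i, α i ≠ β)
    (hcard : Fintype.card κ = Fintype.card ι - 1) (k : ι → R) :
    ∏ i, k (α i) = ∏ x ∈ univ.erase β, k x := by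
  have himage : univ.image α = univ.erase β := by
    refine eq_of_subset_of_card_le (fun x hx => ?_) ?_
    · obtain ⟨i, -, rfl⟩ := mem_image.1 hx
      exact mem_erase.2 ⟨hβ i, mem_univ _⟩
    · rw [card_image_of_injective _ hα, card_erase_of_mem (mem_univ β), card_univ, card_univ,
        hcard]
  rw [← himage, prod_image fun i _ j _ h => hα h]

lemma sum_sum_eq_add_sum_erase_zero [AddCommMonoid R] [Zero ι] (f : ι → ι → R) :
    ∑ a, ∑ b, f a b = f 0 0 + ∑ b ∈ univ.erase 0, f 0 b + ∑ a ∈ univ.erase 0, f a 0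
      + ∑ a ∈ univ.erase 0, ∑ b ∈ univ.erase 0, f a b := by
  simp only [← add_sum_erase _ _ (mem_univ (0 : ι)), sum_add_distrib]
  abel

end Reindexing

section Translation

variable {G R : Type*} [AddCommGroup G] [Fintype G] [DecidableEq G] [CommSemiring R]

lemma sum_prod_erase_map_add (g : G →+ G) (β : G) (k : G → R) :
    ∑ a, ∏ x ∈ univ.erase β, k (g x + a) = ∑ c, ∏ y ∈ univ.erase 0, k (g y + c) := by
  have hshift : ∀ a, ∏ x ∈ univ.erase β, k (g x + a)
      = ∏ y ∈ univ.erase 0, k (g y + (g β + a)) := fun a => by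
    simpa [add_assoc] using
      (prod_erase_comp_equiv (Equiv.addRight β) 0 fun x => k (g x + a)).symm
  simp only [hshift]
  exact Equiv.sum_comp (Equiv.addLeft (g β)) fun c => ∏ y ∈ univ.erase 0, k (g y + c)

lemma prod_erase_zero_map_add_of_bijective (g : G →+ G) (hg : Function.Bijective g)
    (c : G) (k : G → R) :
    ∏ y ∈ univ.erase 0, k (g y + c) = ∏ ρ ∈ univ.erase c, k ρ := by
  simpa using prod_erase_comp_equiv ((Equiv.ofBijective g hg).trans (Equiv.addRight c)) 0 k

end Translation

lemma Algebra.trace_pow_card {K L : Type*} [Field K] [Fintype K] [Field L] [Finite L]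
    [Algebra K L] (x : L) : Algebra.trace K L (x ^ Fintype.card K) = Algebra.trace K L x :=
  Algebra.trace_eq_of_algEquiv (FiniteField.frobeniusAlgEquivOfAlgebraic K L) x

lemma trace_sq_add_self {F : Type*} [Field F] [Finite F] [Algebra (ZMod 2) F] (v : F) :
    Algebra.trace (ZMod 2) F (v ^ 2 + v) = 0 := by
  have htrace_sq := Algebra.trace_pow_card (K := ZMod 2) v
  rw [ZMod.card] at htrace_sq
  rw [map_add, htrace_sq, CharTwo.add_self_eq_zero]

section CharTwo

variable {R : Type*} [CommRing R] [CharP R 2]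

def quadraticAddHom (a b : R) : R →+ R :=
  AddMonoidHom.mk' (fun x => a * x ^ 2 + b * x) fun x y => by rw [CharTwo.add_sq]; ring

@[simp]
lemma quadraticAddHom_apply (a b x : R) : quadraticAddHom a b x = a * x ^ 2 + b * x := rfl

lemma sq_add_self_eq_iff {v w : R} [IsDomain R] :
    w ^ 2 + w = v ^ 2 + v ↔ w = v ∨ w = v + 1 := by
  rw [← sub_eq_zero, ← sub_eq_zero (a := w) (b := v), ← sub_eq_zero (a := w) (b := v + 1),
    ← mul_eq_zero]
  have h2 : (2 : R) = 0 := CharTwo.two_eq_zero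
  constructor <;> intro h
  · linear_combination h + (v ^ 2 - v * w - w + v) * h2
  · linear_combination h - (v ^ 2 - v * w - w + v) * h2

end CharTwo

section FiniteFieldCharTwo

variable {F : Type*} [Field F] [CharP F 2]

lemma bijective_quadraticAddHom_zero_left {b : F} (hb : b ≠ 0) :
    Function.Bijective (quadraticAddHom 0 b) := by
  convert mulLeft_bijective₀ b hb using 1
  ext x
  simp

variable [Fintype F]

lemma bijective_quadraticAddHom_zero_right {a : F} (ha : a ≠ 0) :
    Function.Bijective (quadraticAddHom a 0) := by
  convert (mulLeft_bijective₀ a ha).comp (frobeniusEquiv F 2).bijective using 1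
  ext x
  simp [frobenius_def]

variable [DecidableEq F]

lemma card_filter_sq_add_self_eq {v s : F} (hv : v ^ 2 + v = s) :
    #(univ.filter fun w => w ^ 2 + w = s) = 2 := by
  have hfiber : univ.filter (fun w => w ^ 2 + w = s) = {v, v + 1} := by
    ext w
    simp [← hv, sq_add_self_eq_iff]
  rw [hfiber, card_pair]
  simp

lemma sum_erase_zero_sq_div {M : Type*} [AddCommMonoid M] {a : F} (ha : a ≠ 0) (h : F → M) :
    ∑ b ∈ univ.erase 0, h (b ^ 2 / a) = ∑ γ ∈ univ.erase 0, h γ := by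
  simpa [frobenius_def] using
    sum_erase_comp_equiv ((frobeniusEquiv F 2).toEquiv.trans (Equiv.divRight₀ a ha)) 0 h

lemma sum_mul_prod_quadratic_eq_sum_erase_zero {R κ : Type*} [CommSemiring R] [Fintype κ]
    {α : κ → F} (hα : Function.Injective α) {β : F} (hβ : ∀ i, α i ≠ β)
    (hcard : Fintype.card κ = Fintype.card F - 1) (k : F → R) :
    ∑ a₀, ∑ a₁, ∑ a₂, k a₂ * ∏ i, k (a₂ * α i ^ 2 + a₁ * α i + a₀)
      = ∑ a₂, ∑ a₁, k a₂ * ∑ c, ∏ y ∈ univ.erase 0, k (quadraticAddHom a₂ a₁ y + c) := by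
  rw [sum_comm, sum_congr rfl fun _ _ => sum_comm, sum_comm]
  refine sum_congr rfl fun a₂ _ => sum_congr rfl fun a₁ _ => ?_
  rw [← mul_sum, ← sum_prod_erase_map_add (quadraticAddHom a₂ a₁) β k]
  exact congrArg _ <| sum_congr rfl fun a₀ _ =>
    prod_comp_eq_prod_erase hα hβ hcard fun x => k (quadraticAddHom a₂ a₁ x + a₀)

variable [Algebra (ZMod 2) F]

lemma exists_sq_add_self_eq_iff_trace_eq_zero (s : F) :
    (∃ v, v ^ 2 + v = s) ↔ Algebra.trace (ZMod 2) F s = 0 := by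
  let φ := quadraticAddHom (1 : F) 1
  let tr := (Algebra.trace (ZMod 2) F).toAddMonoidHom
  have hle : φ.range ≤ tr.ker := by
    rintro _ ⟨v, rfl⟩
    simpa [φ, tr] using trace_sq_add_self v
  have hker : Nat.card φ.ker = 2 := by
    rw [← card_filter_sq_add_self_eq (v := (0 : F)) (s := 0) (by simp), ← Fintype.card_subtype,
      ← Nat.card_eq_fintype_card]
    exact Nat.card_congr (Equiv.subtypeEquivRight fun w => by simp [φ])
  have htr : Nat.card tr.range = 2 := by
    rw [AddMonoidHom.range_eq_top.2 (Algebra.trace_surjective (ZMod 2) F)]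
    simp
  -- so `φ.range` and `tr.ker` both have index 2
  have hφ := φ.ker.card_mul_index
  have htr' := tr.ker.card_mul_index
  rw [AddSubgroup.index_ker, hker] at hφ
  rw [AddSubgroup.index_ker, htr] at htr'
  have heq : φ.range = tr.ker := AddSubgroup.eq_of_le_of_card_ge hle (by omega)
  have hs : s ∈ tr.ker ↔ tr s = 0 := AddMonoidHom.mem_ker
  rw [← heq] at hs
  simpa [φ, tr] using hs

variable {M : Type*} [CommMonoid M]

lemma prod_erase_zero_sq_add_self (k : F → M) :
    ∏ v ∈ univ.erase 0, k (v ^ 2 + v)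
      = k 0 * ∏ s ∈ univ.filter (fun ρ => ρ ≠ 0 ∧ Algebra.trace (ZMod 2) F ρ = 0), k s ^ 2 := by
  have hroots : ∀ v : F, v ^ 2 + v = 0 ↔ v = 0 ∨ v = 1 := fun v => by
    simpa using sq_add_self_eq_iff (v := (0 : F)) (w := v)
  have h1 : (1 : F) ∈ univ.erase 0 := mem_erase.2 ⟨one_ne_zero, mem_univ _⟩
  rw [← mul_prod_erase _ _ h1, one_pow, CharTwo.add_self_eq_zero]
  congr 1
  have hmaps : ∀ v ∈ (univ.erase 0).erase 1,
      v ^ 2 + v ∈ univ.filter (fun ρ => ρ ≠ 0 ∧ Algebra.trace (ZMod 2) F ρ = 0) := by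
    intro v hv
    simp only [mem_erase, mem_univ] at hv
    simp [hroots, hv.1, hv.2.1, trace_sq_add_self]
  rw [← prod_fiberwise_of_maps_to hmaps]
  refine prod_congr rfl fun s hs => ?_
  simp only [mem_filter, mem_univ, true_and] at hs
  obtain ⟨v, hv⟩ := (exists_sq_add_self_eq_iff_trace_eq_zero s).2 hs.2
  have hfiber : ((univ.erase 0).erase 1).filter (fun w : F => w ^ 2 + w = s)
      = univ.filter (fun w => w ^ 2 + w = s) := by
    ext w
    simp only [mem_filter, mem_erase, mem_univ, and_true, true_and, and_iff_right_iff_imp]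
    rintro rfl
    exact ⟨by rintro rfl; exact hs.1 (by rw [one_pow, CharTwo.add_self_eq_zero]),
      by rintro rfl; simp at hs⟩
  rw [hfiber, prod_congr rfl fun w hw => by rw [(mem_filter.1 hw).2], prod_const,
    card_filter_sq_add_self_eq hv]

lemma prod_erase_zero_quadratic {a b : F} (ha : a ≠ 0) (hb : b ≠ 0) (c : F) (k : F → M) :
    ∏ y ∈ univ.erase 0, k (a * y ^ 2 + b * y + c)
      = k c * ∏ s ∈ univ.filter (fun ρ => ρ ≠ 0 ∧ Algebra.trace (ZMod 2) F ρ = 0),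
          k (b ^ 2 / a * s + c) ^ 2 := by
  have hscale := prod_erase_comp_equiv (Equiv.mulLeft₀ (b / a) (div_ne_zero hb ha)) 0
    fun y => k (a * y ^ 2 + b * y + c)
  have hcomplete : ∀ u, a * (b / a * u) ^ 2 + b * (b / a * u) + c = b ^ 2 / a * (u ^ 2 + u) + c := by
    intro u
    field_simp
  simp only [Equiv.mulLeft₀_apply, mul_zero, hcomplete] at hscale
  have hcore := prod_erase_zero_sq_add_self fun s => k (b ^ 2 / a * s + c)
  simp only [mul_zero, zero_add] at hcore
  rw [← hscale, hcore]

end FiniteFieldCharTwo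

theorem cwe_ERS3_char2_punctured_general (m : ℕ)
    (F : Type) [Field F] [Fintype F] [DecidableEq F] [Algebra (ZMod 2) F]
    (hcard : Fintype.card F = 2 ^ m)
    (β : F) (α : Fin (2 ^ m - 1) → F) (hα : Function.Injective α)
    (hβ : ∀ i, α i ≠ β) :
    (∑ a₀ : F, ∑ a₁ : F, ∑ a₂ : F,
        (X a₂ : MvPolynomial F ℤ) *
          ∏ i : Fin (2 ^ m - 1), (X (a₂ * α i ^ 2 + a₁ * α i + a₀) : MvPolynomial F ℤ))
      = (∑ ρ : F, (X 0 : MvPolynomial F ℤ) * (X ρ : MvPolynomial F ℤ) ^ (2 ^ m - 1))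
        + ((2 ^ m - 1 : ℕ) : MvPolynomial F ℤ) *
            ∑ γ₁ : F, (X 0 : MvPolynomial F ℤ) * ∏ ρ ∈ univ.erase γ₁, (X ρ : MvPolynomial F ℤ)
        + ∑ γ₂ ∈ univ.filter (fun γ₂ : F => γ₂ ≠ 0), ∑ γ₁ : F,
            (X γ₂ : MvPolynomial F ℤ) * ∏ ρ ∈ univ.erase γ₁, (X ρ : MvPolynomial F ℤ)
        + ∑ γ₂ ∈ univ.filter (fun γ₂ : F => γ₂ ≠ 0),
            ∑ γ₁ ∈ univ.filter (fun γ₁ : F => γ₁ ≠ 0), ∑ γ₀ : F,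
              (X γ₂ : MvPolynomial F ℤ) * (X γ₀ : MvPolynomial F ℤ) *
                ∏ ρ ∈ univ.filter (fun ρ : F => ρ ≠ 0 ∧ Algebra.trace (ZMod 2) F ρ = 0),
                  (X (γ₁ * ρ + γ₀) : MvPolynomial F ℤ) ^ 2 := by
  have : CharP F 2 := charP_of_injective_algebraMap' (ZMod 2) 2
  have hcard' : #(univ.erase (0 : F)) = 2 ^ m - 1 := by simp [hcard]
  rw [sum_mul_prod_quadratic_eq_sum_erase_zero hα hβ (by simp [hcard]) X,
    sum_sum_eq_add_sum_erase_zero]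
  simp only [filter_ne']
  congr 1
  congr 1
  congr 1
  · simp [mul_sum, hcard']
  · have hline : ∀ b ∈ univ.erase (0 : F),
        X 0 * ∑ c, ∏ y ∈ univ.erase 0, (X (quadraticAddHom 0 b y + c) : MvPolynomial F ℤ)
          = ∑ γ₁, X 0 * ∏ ρ ∈ univ.erase γ₁, X ρ := fun b hb => by
      simp only [prod_erase_zero_map_add_of_bijective _
        (bijective_quadraticAddHom_zero_left (ne_of_mem_erase hb)), mul_sum]
    rw [sum_congr rfl hline, sum_const, hcard', nsmul_eq_mul]
  · refine sum_congr rfl fun a ha => ?_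
    simp only [prod_erase_zero_map_add_of_bijective _
      (bijective_quadraticAddHom_zero_right (ne_of_mem_erase ha)), mul_sum]
  · refine sum_congr rfl fun a ha => ?_
    refine Eq.trans ?_ (sum_erase_zero_sq_div (ne_of_mem_erase ha) _)
    refine sum_congr rfl fun b hb => ?_
    simp only [quadraticAddHom_apply,
      prod_erase_zero_quadratic (ne_of_mem_erase ha) (ne_of_mem_erase hb), mul_sum, mul_assoc]

/-- Complete weight enumerator of `ERS_3(α)` over `F_{2^m}`, where `α` enumerates
`F_{2^m} \ {β}`. -/
theorem cwe_ERS3_char2_punctured (m : ℕ) (hm : 0 < m)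
    (F : Type) [Field F] [Fintype F] [DecidableEq F] [Algebra (ZMod 2) F]
    (hcard : Fintype.card F = 2 ^ m) (h4 : 4 ≤ 2 ^ m)
    (β : F) (α : Fin (2 ^ m - 1) → F) (hα : Function.Injective α)
    (hβ : ∀ i, α i ≠ β) :
    (∑ a₀ : F, ∑ a₁ : F, ∑ a₂ : F,
        (X a₂ : MvPolynomial F ℤ) *
          ∏ i : Fin (2 ^ m - 1), (X (a₂ * α i ^ 2 + a₁ * α i + a₀) : MvPolynomial F ℤ))
      = (∑ ρ : F, (X 0 : MvPolynomial F ℤ) * (X ρ : MvPolynomial F ℤ) ^ (2 ^ m - 1))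
        + ((2 ^ m - 1 : ℕ) : MvPolynomial F ℤ) *
            ∑ γ₁ : F, (X 0 : MvPolynomial F ℤ) * ∏ ρ ∈ univ.erase γ₁, (X ρ : MvPolynomial F ℤ)
        + ∑ γ₂ ∈ univ.filter (fun γ₂ : F => γ₂ ≠ 0), ∑ γ₁ : F,
            (X γ₂ : MvPolynomial F ℤ) * ∏ ρ ∈ univ.erase γ₁, (X ρ : MvPolynomial F ℤ)
        + ∑ γ₂ ∈ univ.filter (fun γ₂ : F => γ₂ ≠ 0),
            ∑ γ₁ ∈ univ.filter (fun γ₁ : F => γ₁ ≠ 0), ∑ γ₀ : F,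
              (X γ₂ : MvPolynomial F ℤ) * (X γ₀ : MvPolynomial F ℤ) *
                ∏ ρ ∈ univ.filter (fun ρ : F => ρ ≠ 0 ∧ Algebra.trace (ZMod 2) F ρ = 0),
                  (X (γ₁ * ρ + γ₀) : MvPolynomial F ℤ) ^ 2 :=
  cwe_ERS3_char2_punctured_general m F hcard β α hα hβ
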